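/- arXiv:1601.06570 — 2 statements merged into one kernel-verified Lean document; each statement's English description precedes it below -/
import Mathlib

section
/- Let ϖ, ρ, σ : ℝ³ → ℝ be continuously differentiable 2-homogeneous functions, and let u, v, w : ℝ³ → ℝ be twice continuously differentiable functions each satisfying the linear PDE f_x·(ϖ − x) + f_y·(ρ − y) + f_z·(σ − z) = −f (for f equal to u, v and w, at every point (x,y,z) ∈ ℝ³). Then at every point (x,y,z) ∈ ℝ³ the 4×4 determinant with first row (2(x·u_x + y·u_y + z·u_z − u), x·u_xx + y·u_xy + z·u_xz, x·u_xy + y·u_yy + z·u_yz, x·u_xz + y·u_yz + z·u_zz), second row (u, u_x, u_y, u_z), third row (v, v_x, v_y, v_z) and fourth row (w, w_x, w_y, w_z) vanishes. -/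
/-!
The vector `(1, ϖ - x, ρ - y, σ - z)` lies in the kernel of the matrix. For the last three rows
this is the linear PDE itself. For the first row, write `F` for `u` as a function on `ℝ³` and
`P = (ϖ, ρ, σ)`, so that the PDE reads `DF(q) (P q - q) = -F q`. Differentiating it in the radial
direction `p` and using Euler's identity `DP(p) p = 2 P p` gives
`D²F(p) p (P p - p) = 2 (F p - DF(p) p)`. By the symmetry of `D²F(p)` the entries
`x u_xi + y u_yi + z u_zi` of the first row are `D²F(p) p e_i`, and the first entry is
`2 (DF(p) p - F p)`, so the first row is orthogonal to the vector as well.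
-/

section Transport

variable {E V : Type*} [NormedAddCommGroup E] [NormedSpace ℝ E]
  [NormedAddCommGroup V] [NormedSpace ℝ V]

theorem hasFDerivAt_fderiv_apply {F : E → V} {p : E}
    (hF : DifferentiableAt ℝ (fderiv ℝ F) p) (v : E) :
    HasFDerivAt (fun q => fderiv ℝ F q v) ((fderiv ℝ (fderiv ℝ F) p).flip v) p := by
  simpa using hF.hasFDerivAt.clm_apply (hasFDerivAt_const v p)

theorem fderiv_apply_self_of_homogeneous {f : E → V} {p : E} {k : ℕ}
    (hf : DifferentiableAt ℝ f p) (hhom : ∀ t : ℝ, f (t • p) = t ^ k • f p) :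
    fderiv ℝ f p p = (k : ℝ) • f p := by
  have hchain : HasDerivAt (fun t : ℝ => f (t • p)) (fderiv ℝ f p p) 1 := by
    rw [← one_smul ℝ p] at hf
    simpa [Function.comp_def] using
      hf.hasFDerivAt.comp_hasDerivAt (1 : ℝ) ((hasDerivAt_id (1 : ℝ)).smul_const p)
  have hpow : HasDerivAt (fun t : ℝ => f (t • p)) ((k : ℝ) • f p) 1 := by
    simpa [hhom] using (hasDerivAt_pow k (1 : ℝ)).smul_const (f p)
  exact hchain.unique hpow

theorem fderiv_fderiv_apply_self_of_transport {F : E → ℝ} {P : E → E} {p : E}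
    (hF : DifferentiableAt ℝ F p) (hF' : DifferentiableAt ℝ (fderiv ℝ F) p)
    (hP : DifferentiableAt ℝ P p) (hhom : ∀ t : ℝ, P (t • p) = t ^ 2 • P p)
    (hpde : ∀ q, fderiv ℝ F q (P q - q) = -F q) :
    fderiv ℝ (fderiv ℝ F) p p (P p - p) = 2 * (F p - fderiv ℝ F p p) := by
  have hderiv : HasFDerivAt (fun q => fderiv ℝ F q (P q - q) + F q) _ p :=
    (hF'.hasFDerivAt.clm_apply (hP.hasFDerivAt.sub (hasFDerivAt_id p))).add hF.hasFDerivAt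
  simp only [hpde, neg_add_cancel] at hderiv
  have hradial := congrArg (· p) ((hasFDerivAt_const (0 : ℝ) p).unique hderiv)
  have heuler : fderiv ℝ P p p = (2 : ℝ) • P p := by
    exact_mod_cast fderiv_apply_self_of_homogeneous hP hhom
  simp only [zero_apply, add_apply, sub_apply, ContinuousLinearMap.comp_apply,
    ContinuousLinearMap.flip_apply, ContinuousLinearMap.id_apply, Pi.sub_apply, id_eq, heuler,
    map_sub, map_smul, smul_eq_mul] at hradial
  have hpde_p := hpde p
  rw [map_sub] at hpde_p ⊢
  linear_combination -hradial - 2 * hpde_p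

end Transport

section Coordinates

variable {V : Type*} [NormedAddCommGroup V] [NormedSpace ℝ V]

theorem ContinuousLinearMap.apply_triple (L : ℝ × ℝ × ℝ →L[ℝ] V) (a b c : ℝ) :
    L (a, b, c) = a • L (1, 0, 0) + b • L (0, 1, 0) + c • L (0, 0, 1) := by
  rw [← map_smul, ← map_smul, ← map_smul, ← map_add, ← map_add]
  simp

variable {G : ℝ × ℝ × ℝ → V} {G' : ℝ × ℝ × ℝ →L[ℝ] V} {x y z : ℝ}

theorem HasFDerivAt.hasDerivAt_partial₁ (h : HasFDerivAt G G' (x, y, z)) :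
    HasDerivAt (fun s => G (s, y, z)) (G' (1, 0, 0)) x :=
  h.comp_hasDerivAt x ((hasDerivAt_id x).prodMk ((hasDerivAt_const x y).prodMk
    (hasDerivAt_const x z)))

theorem HasFDerivAt.hasDerivAt_partial₂ (h : HasFDerivAt G G' (x, y, z)) :
    HasDerivAt (fun s => G (x, s, z)) (G' (0, 1, 0)) y :=
  h.comp_hasDerivAt y ((hasDerivAt_const y x).prodMk ((hasDerivAt_id y).prodMk
    (hasDerivAt_const y z)))

theorem HasFDerivAt.hasDerivAt_partial₃ (h : HasFDerivAt G G' (x, y, z)) :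
    HasDerivAt (fun s => G (x, y, s)) (G' (0, 0, 1)) z :=
  h.comp_hasDerivAt z ((hasDerivAt_const z x).prodMk ((hasDerivAt_const z y).prodMk
    (hasDerivAt_id z)))

theorem partials_eq_fderiv {g gx gy gz : ℝ → ℝ → ℝ → ℝ}
    (hg : Differentiable ℝ fun p : ℝ × ℝ × ℝ => g p.1 p.2.1 p.2.2)
    (hgx : ∀ x y z, gx x y z = deriv (fun s => g s y z) x)
    (hgy : ∀ x y z, gy x y z = deriv (fun s => g x s z) y)
    (hgz : ∀ x y z, gz x y z = deriv (fun s => g x y s) z) :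
    (∀ x y z, gx x y z = fderiv ℝ (fun p : ℝ × ℝ × ℝ => g p.1 p.2.1 p.2.2) (x, y, z) (1, 0, 0)) ∧
    (∀ x y z, gy x y z = fderiv ℝ (fun p : ℝ × ℝ × ℝ => g p.1 p.2.1 p.2.2) (x, y, z) (0, 1, 0)) ∧
    (∀ x y z, gz x y z = fderiv ℝ (fun p : ℝ × ℝ × ℝ => g p.1 p.2.1 p.2.2) (x, y, z) (0, 0, 1)) :=
  ⟨fun x y z => (hgx x y z).trans (hg _).hasFDerivAt.hasDerivAt_partial₁.deriv,
    fun x y z => (hgy x y z).trans (hg _).hasFDerivAt.hasDerivAt_partial₂.deriv,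
    fun x y z => (hgz x y z).trans (hg _).hasFDerivAt.hasDerivAt_partial₃.deriv⟩

theorem radial_second_partials_eq {F : ℝ × ℝ × ℝ → ℝ} (hF : ContDiff ℝ 2 F)
    {ux uy uz uxx uxy uxz uyy uyz uzz : ℝ → ℝ → ℝ → ℝ}
    (hux : ∀ x y z, ux x y z = fderiv ℝ F (x, y, z) (1, 0, 0))
    (huy : ∀ x y z, uy x y z = fderiv ℝ F (x, y, z) (0, 1, 0))
    (huz : ∀ x y z, uz x y z = fderiv ℝ F (x, y, z) (0, 0, 1))
    (huxx : ∀ x y z, uxx x y z = deriv (fun s => ux s y z) x)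
    (huxy : ∀ x y z, uxy x y z = deriv (fun s => ux x s z) y)
    (huxz : ∀ x y z, uxz x y z = deriv (fun s => ux x y s) z)
    (huyy : ∀ x y z, uyy x y z = deriv (fun s => uy x s z) y)
    (huyz : ∀ x y z, uyz x y z = deriv (fun s => uy x y s) z)
    (huzz : ∀ x y z, uzz x y z = deriv (fun s => uz x y s) z) (x y z : ℝ) :
    x * uxx x y z + y * uxy x y z + z * uxz x y z
        = fderiv ℝ (fderiv ℝ F) (x, y, z) (x, y, z) (1, 0, 0) ∧
      x * uxy x y z + y * uyy x y z + z * uyz x y z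
        = fderiv ℝ (fderiv ℝ F) (x, y, z) (x, y, z) (0, 1, 0) ∧
      x * uxz x y z + y * uyz x y z + z * uzz x y z
        = fderiv ℝ (fderiv ℝ F) (x, y, z) (x, y, z) (0, 0, 1) := by
  set H := fderiv ℝ (fderiv ℝ F) (x, y, z)
  have hF' : ∀ v, HasFDerivAt (fun q => fderiv ℝ F q v) (H.flip v) (x, y, z) := fun v =>
    hasFDerivAt_fderiv_apply ((hF.fderiv_right le_rfl).differentiable one_ne_zero _) v
  have hxx : uxx x y z = H (1, 0, 0) (1, 0, 0) := by
    simp_rw [huxx, hux]; exact (hF' _).hasDerivAt_partial₁.deriv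
  have hxy : uxy x y z = H (0, 1, 0) (1, 0, 0) := by
    simp_rw [huxy, hux]; exact (hF' _).hasDerivAt_partial₂.deriv
  have hxz : uxz x y z = H (0, 0, 1) (1, 0, 0) := by
    simp_rw [huxz, hux]; exact (hF' _).hasDerivAt_partial₃.deriv
  have hyy : uyy x y z = H (0, 1, 0) (0, 1, 0) := by
    simp_rw [huyy, huy]; exact (hF' _).hasDerivAt_partial₂.deriv
  have hyz : uyz x y z = H (0, 0, 1) (0, 1, 0) := by
    simp_rw [huyz, huy]; exact (hF' _).hasDerivAt_partial₃.deriv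
  have hzz : uzz x y z = H (0, 0, 1) (0, 0, 1) := by
    simp_rw [huzz, huz]; exact (hF' _).hasDerivAt_partial₃.deriv
  have hsymm : IsSymmSndFDerivAt ℝ F (x, y, z) :=
    hF.contDiffAt.isSymmSndFDerivAt (by simp [minSmoothness_of_isRCLikeNormedField])
  rw [H.apply_triple x y z]
  simp only [add_apply, smul_apply, smul_eq_mul]
  refine ⟨by rw [hxx, hxy, hxz], ?_, ?_⟩
  · rw [hxy, hyy, hyz, hsymm.eq (0, 1, 0) (1, 0, 0)]
  · rw [hxz, hyz, hzz, hsymm.eq (0, 0, 1) (1, 0, 0), hsymm.eq (0, 0, 1) (0, 1, 0)]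

end Coordinates

theorem stmt_1_general
    (ϖ ρ σ u v w : ℝ → ℝ → ℝ → ℝ)
    (hϖ : ContDiff ℝ 1 (fun p : ℝ × ℝ × ℝ => ϖ p.1 p.2.1 p.2.2))
    (hρ : ContDiff ℝ 1 (fun p : ℝ × ℝ × ℝ => ρ p.1 p.2.1 p.2.2))
    (hσ : ContDiff ℝ 1 (fun p : ℝ × ℝ × ℝ => σ p.1 p.2.1 p.2.2))
    (hϖhom : ∀ t x y z : ℝ, ϖ (t * x) (t * y) (t * z) = t ^ 2 * ϖ x y z)
    (hρhom : ∀ t x y z : ℝ, ρ (t * x) (t * y) (t * z) = t ^ 2 * ρ x y z)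
    (hσhom : ∀ t x y z : ℝ, σ (t * x) (t * y) (t * z) = t ^ 2 * σ x y z)
    (hu : ContDiff ℝ 2 (fun p : ℝ × ℝ × ℝ => u p.1 p.2.1 p.2.2))
    -- first order partial derivatives
    (ux uy uz vx vy vz wx wy wz : ℝ → ℝ → ℝ → ℝ)
    (hux : ∀ x y z, ux x y z = deriv (fun s => u s y z) x)
    (huy : ∀ x y z, uy x y z = deriv (fun s => u x s z) y)
    (huz : ∀ x y z, uz x y z = deriv (fun s => u x y s) z)
    -- second order partial derivatives of u
    (uxx uxy uxz uyy uyz uzz : ℝ → ℝ → ℝ → ℝ)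
    (huxx : ∀ x y z, uxx x y z = deriv (fun s => ux s y z) x)
    (huxy : ∀ x y z, uxy x y z = deriv (fun s => ux x s z) y)
    (huxz : ∀ x y z, uxz x y z = deriv (fun s => ux x y s) z)
    (huyy : ∀ x y z, uyy x y z = deriv (fun s => uy x s z) y)
    (huyz : ∀ x y z, uyz x y z = deriv (fun s => uy x y s) z)
    (huzz : ∀ x y z, uzz x y z = deriv (fun s => uz x y s) z)
    -- the linear PDE for u, v, w
    (hpdeu : ∀ x y z : ℝ,
      ux x y z * (ϖ x y z - x) + uy x y z * (ρ x y z - y) + uz x y z * (σ x y z - z)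
        = -(u x y z))
    (hpdev : ∀ x y z : ℝ,
      vx x y z * (ϖ x y z - x) + vy x y z * (ρ x y z - y) + vz x y z * (σ x y z - z)
        = -(v x y z))
    (hpdew : ∀ x y z : ℝ,
      wx x y z * (ϖ x y z - x) + wy x y z * (ρ x y z - y) + wz x y z * (σ x y z - z)
        = -(w x y z)) :
    ∀ x y z : ℝ,
      Matrix.det
        !![2 * (x * ux x y z + y * uy x y z + z * uz x y z - u x y z),
            x * uxx x y z + y * uxy x y z + z * uxz x y z,
            x * uxy x y z + y * uyy x y z + z * uyz x y z,
            x * uxz x y z + y * uyz x y z + z * uzz x y z;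
          u x y z, ux x y z, uy x y z, uz x y z;
          v x y z, vx x y z, vy x y z, vz x y z;
          w x y z, wx x y z, wy x y z, wz x y z] = 0 := by
  intro x y z
  set F : ℝ × ℝ × ℝ → ℝ := fun q => u q.1 q.2.1 q.2.2
  set P : ℝ × ℝ × ℝ → ℝ × ℝ × ℝ :=
    fun q => (ϖ q.1 q.2.1 q.2.2, ρ q.1 q.2.1 q.2.2, σ q.1 q.2.1 q.2.2)
  obtain ⟨hux', huy', huz'⟩ := partials_eq_fderiv (hu.differentiable two_ne_zero) hux huy huz
  have hpde : ∀ q, fderiv ℝ F q (P q - q) = -F q := by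
    rintro ⟨a, b, c⟩
    rw [← hpdeu, hux', huy', huz', Prod.mk_sub_mk, Prod.mk_sub_mk,
      ContinuousLinearMap.apply_triple]
    ring
  have hhom : ∀ t : ℝ, P (t • (x, y, z)) = t ^ 2 • P (x, y, z) := fun t => by
    simp [P, hϖhom, hρhom, hσhom]
  have hfirst_row := fderiv_fderiv_apply_self_of_transport (hu.differentiable two_ne_zero _)
    ((hu.fderiv_right le_rfl).differentiable one_ne_zero _)
    ((hϖ.prodMk (hρ.prodMk hσ)).differentiable one_ne_zero _) hhom hpde
  obtain ⟨h₁, h₂, h₃⟩ :=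
    radial_second_partials_eq hu hux' huy' huz' huxx huxy huxz huyy huyz huzz x y z
  rw [Prod.mk_sub_mk, Prod.mk_sub_mk, ContinuousLinearMap.apply_triple,
    (fderiv ℝ F (x, y, z)).apply_triple, ← h₁, ← h₂, ← h₃, ← hux', ← huy', ← huz'] at hfirst_row
  rw [← Matrix.exists_mulVec_eq_zero_iff]
  refine ⟨![1, ϖ x y z - x, ρ x y z - y, σ x y z - z], by simp, ?_⟩
  ext i
  fin_cases i <;> simp [Matrix.mulVec, dotProduct, Fin.sum_univ_four]
  · linear_combination hfirst_row
  · linear_combination hpdeu x y z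
  · linear_combination hpdev x y z
  · linear_combination hpdew x y z

/-- any triple `u, v, w` of solutions of the linear flow PDE
satisfies the nonlinear 4×4 determinant PDE (stated here for `u`). -/
theorem stmt_1
    (ϖ ρ σ u v w : ℝ → ℝ → ℝ → ℝ)
    (hϖ : ContDiff ℝ 1 (fun p : ℝ × ℝ × ℝ => ϖ p.1 p.2.1 p.2.2))
    (hρ : ContDiff ℝ 1 (fun p : ℝ × ℝ × ℝ => ρ p.1 p.2.1 p.2.2))
    (hσ : ContDiff ℝ 1 (fun p : ℝ × ℝ × ℝ => σ p.1 p.2.1 p.2.2))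
    (hϖhom : ∀ t x y z : ℝ, ϖ (t * x) (t * y) (t * z) = t ^ 2 * ϖ x y z)
    (hρhom : ∀ t x y z : ℝ, ρ (t * x) (t * y) (t * z) = t ^ 2 * ρ x y z)
    (hσhom : ∀ t x y z : ℝ, σ (t * x) (t * y) (t * z) = t ^ 2 * σ x y z)
    (hu : ContDiff ℝ 2 (fun p : ℝ × ℝ × ℝ => u p.1 p.2.1 p.2.2))
    (hv : ContDiff ℝ 2 (fun p : ℝ × ℝ × ℝ => v p.1 p.2.1 p.2.2))
    (hw : ContDiff ℝ 2 (fun p : ℝ × ℝ × ℝ => w p.1 p.2.1 p.2.2))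
    -- first order partial derivatives
    (ux uy uz vx vy vz wx wy wz : ℝ → ℝ → ℝ → ℝ)
    (hux : ∀ x y z, ux x y z = deriv (fun s => u s y z) x)
    (huy : ∀ x y z, uy x y z = deriv (fun s => u x s z) y)
    (huz : ∀ x y z, uz x y z = deriv (fun s => u x y s) z)
    (hvx : ∀ x y z, vx x y z = deriv (fun s => v s y z) x)
    (hvy : ∀ x y z, vy x y z = deriv (fun s => v x s z) y)
    (hvz : ∀ x y z, vz x y z = deriv (fun s => v x y s) z)
    (hwx : ∀ x y z, wx x y z = deriv (fun s => w s y z) x)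
    (hwy : ∀ x y z, wy x y z = deriv (fun s => w x s z) y)
    (hwz : ∀ x y z, wz x y z = deriv (fun s => w x y s) z)
    -- second order partial derivatives of u
    (uxx uxy uxz uyy uyz uzz : ℝ → ℝ → ℝ → ℝ)
    (huxx : ∀ x y z, uxx x y z = deriv (fun s => ux s y z) x)
    (huxy : ∀ x y z, uxy x y z = deriv (fun s => ux x s z) y)
    (huxz : ∀ x y z, uxz x y z = deriv (fun s => ux x y s) z)
    (huyy : ∀ x y z, uyy x y z = deriv (fun s => uy x s z) y)
    (huyz : ∀ x y z, uyz x y z = deriv (fun s => uy x y s) z)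
    (huzz : ∀ x y z, uzz x y z = deriv (fun s => uz x y s) z)
    -- the linear PDE for u, v, w
    (hpdeu : ∀ x y z : ℝ,
      ux x y z * (ϖ x y z - x) + uy x y z * (ρ x y z - y) + uz x y z * (σ x y z - z)
        = -(u x y z))
    (hpdev : ∀ x y z : ℝ,
      vx x y z * (ϖ x y z - x) + vy x y z * (ρ x y z - y) + vz x y z * (σ x y z - z)
        = -(v x y z))
    (hpdew : ∀ x y z : ℝ,
      wx x y z * (ϖ x y z - x) + wy x y z * (ρ x y z - y) + wz x y z * (σ x y z - z)
        = -(w x y z)) :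
    ∀ x y z : ℝ,
      Matrix.det
        !![2 * (x * ux x y z + y * uy x y z + z * uz x y z - u x y z),
            x * uxx x y z + y * uxy x y z + z * uxz x y z,
            x * uxy x y z + y * uyy x y z + z * uyz x y z,
            x * uxz x y z + y * uyz x y z + z * uzz x y z;
          u x y z, ux x y z, uy x y z, uz x y z;
          v x y z, vx x y z, vy x y z, vz x y z;
          w x y z, wx x y z, wy x y z, wz x y z] = 0 :=
  stmt_1_general ϖ ρ σ u v w hϖ hρ hσ hϖhom hρhom hσhom hu ux uy uz vx vy vz wx wy wz hux huy huz
    uxx uxy uxz uyy uyz uzz huxx huxy huxz huyy huyz huzz hpdeu hpdev hpdew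
end

section
/- Let n ≥ 3 be a natural number. For x = (x₁,…,x_n) ∈ ℝⁿ put S = Σ_{j=1}^{n} x_j and define ϖ_ℓ(x) = (n+1)·x_ℓ² − 2·x_ℓ·S for 1 ≤ ℓ ≤ n. Define the form 𝒬(x) = x₁^{n−2} · Π_{2 ≤ i < j ≤ n} (x_i − x_j). Then Σ_{ℓ=1}^{n} (∂𝒬/∂x_ℓ)(x) · ϖ_ℓ(x) = 0 for all x ∈ ℝⁿ; that is, 𝒬 is a polynomial first integral of the vector field (ϖ₁,…,ϖ_n). -/
/-!
Along the vector field `ϖ_ℓ = x_ℓ ((n+1) x_ℓ - 2S)` the coordinate hyperplane `x₁ = 0` and every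
hyperplane `x_i = x_j` are invariant: `x₁` has cofactor `(n+1) x₁ - 2S` and `x_i - x_j` has cofactor
`(n+1)(x_i + x_j) - 2S`. Cofactors add under products, so `𝒬` has cofactor
`(n-2)((n+1) x₁ - 2S) + Σ_{2≤i<j≤n} ((n+1)(x_i + x_j) - 2S)`. Every index `≥ 2` lies in `n - 2` of
the pairs, so the sum is `(n-2)((n+1)(S - x₁) - (n-1) S)`, and the total cofactor vanishes.
-/

open Finset

theorem sum_map_single_one_mul_eq_map {ι R F : Type*} [Fintype ι] [DecidableEq ι]
    [CommSemiring R] [FunLike F (ι → R) R] [LinearMapClass F R (ι → R) R] (L : F) (v : ι → R) :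
    ∑ i, L (Pi.single i 1) * v i = L v := by
  conv_rhs => rw [pi_eq_sum_univ' v]
  simp [map_sum, map_smul, mul_comm]

theorem Finset.sum_product_filter_lt_add {α M : Type*} [LinearOrder α] [AddCommMonoid M]
    (s : Finset α) (g : α → M) :
    ∑ p ∈ s ×ˢ s with p.1 < p.2, (g p.1 + g p.2) = (#s - 1) • ∑ i ∈ s, g i := by
  have hswap : ∑ p ∈ s ×ˢ s with p.1 < p.2, g p.2 = ∑ p ∈ s ×ˢ s with p.2 < p.1, g p.1 :=
    sum_equiv (Equiv.prodComm α α) (by simp [and_comm]) (by simp)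
  have hrow : ∀ i ∈ s, ∑ j ∈ s, (if i < j then g i else 0) + ∑ j ∈ s, (if j < i then g i else 0)
      = (#s - 1) • g i := by
    intro i hi
    rw [← sum_add_distrib, ← card_erase_of_mem hi, ← sum_const, ← add_sum_erase s _ hi]
    simp only [lt_irrefl, if_false, add_zero, zero_add]
    refine sum_congr rfl fun j hj => ?_
    rcases (ne_of_mem_erase hj).lt_or_gt with h | h <;> simp [h, h.not_gt]
  rw [sum_add_distrib, hswap, sum_filter, sum_filter, sum_product, sum_product, ← sum_add_distrib,
    smul_sum]
  exact sum_congr rfl hrow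

section Cofactor

variable {𝕜 E : Type*} [NontriviallyNormedField 𝕜] [NormedAddCommGroup E] [NormedSpace 𝕜 E]

/-- The derivative of `f` at `x` in direction `v` is `c * f x`: the pointwise form of `f` being a
Darboux function of the vector field `v` with cofactor `c`. -/
def HasCofactorAt (f : E → 𝕜) (v : E) (c : 𝕜) (x : E) : Prop :=
  DifferentiableAt 𝕜 f x ∧ fderiv 𝕜 f x v = c * f x

variable {f g : E → 𝕜} {v x : E} {c d : 𝕜}

theorem hasCofactorAt_const (a : 𝕜) : HasCofactorAt (fun _ => a) v 0 x := by
  simp [HasCofactorAt]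

theorem HasCofactorAt.mul (hf : HasCofactorAt f v c x) (hg : HasCofactorAt g v d x) :
    HasCofactorAt (fun y => f y * g y) v (c + d) x := by
  refine ⟨hf.1.mul hg.1, ?_⟩
  rw [fderiv_fun_mul hf.1 hg.1]
  simp only [add_apply, smul_apply, smul_eq_mul, hf.2, hg.2]
  ring

theorem HasCofactorAt.finsetProd {ι : Type*} {s : Finset ι} {f : ι → E → 𝕜} {c : ι → 𝕜}
    (hf : ∀ i ∈ s, HasCofactorAt (f i) v (c i) x) :
    HasCofactorAt (fun y => ∏ i ∈ s, f i y) v (∑ i ∈ s, c i) x := by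
  classical
  induction s using Finset.induction_on with
  | empty => simpa using hasCofactorAt_const (1 : 𝕜)
  | insert i s hi ih =>
    simp only [prod_insert hi, sum_insert hi]
    exact (hf i (mem_insert_self i s)).mul (ih fun j hj => hf j (mem_insert_of_mem hj))

theorem HasCofactorAt.pow (hf : HasCofactorAt f v c x) (k : ℕ) :
    HasCofactorAt (fun y => f y ^ k) v (k * c) x := by
  simpa using HasCofactorAt.finsetProd (s := range k) fun _ _ => hf

end Cofactor

section Quadratic

variable {𝕜 ι : Type*} [NontriviallyNormedField 𝕜] [Fintype ι] {v x : ι → 𝕜} {a b : 𝕜}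

theorem hasCofactorAt_apply (hv : ∀ ℓ, v ℓ = x ℓ * (a * x ℓ - b)) (i : ι) :
    HasCofactorAt (fun y => y i) v (a * x i - b) x := by
  refine ⟨differentiableAt_apply i x, ?_⟩
  rw [(hasFDerivAt_apply i x).fderiv, ContinuousLinearMap.proj_apply, hv, mul_comm]

theorem hasCofactorAt_apply_sub_apply (hv : ∀ ℓ, v ℓ = x ℓ * (a * x ℓ - b)) (i j : ι) :
    HasCofactorAt (fun y => y i - y j) v (a * (x i + x j) - b) x := by
  refine ⟨(differentiableAt_apply i x).sub (differentiableAt_apply j x), ?_⟩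
  rw [fderiv_fun_sub (differentiableAt_apply i x) (differentiableAt_apply j x),
    (hasFDerivAt_apply i x).fderiv, (hasFDerivAt_apply j x).fderiv]
  simp only [sub_apply, ContinuousLinearMap.proj_apply, hv]
  ring

end Quadratic

theorem superflow_cofactor_eq_zero {n : ℕ} (x : Fin n → ℝ) (z : Fin n) :
    ((n - 2 : ℕ) : ℝ) * ((n + 1) * x z - 2 * ∑ j, x j)
      + ∑ p ∈ univ.erase z ×ˢ univ.erase z with p.1 < p.2,
          ((n + 1) * (x p.1 + x p.2) - 2 * ∑ j, x j) = 0 := by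
  set S := ∑ j, x j
  have hsum : ∑ i, ((n + 1) * x i - S) = S := by
    rw [sum_sub_distrib, ← mul_sum, sum_const, card_univ, Fintype.card_fin, nsmul_eq_mul]
    ring
  -- split `-2S` evenly between the two endpoints of each pair
  have hpairs := sum_product_filter_lt_add (univ.erase z) fun i => (n + 1) * x i - S
  rw [card_erase_of_mem (mem_univ z), card_univ, Fintype.card_fin, Nat.sub_sub, nsmul_eq_mul,
    sum_erase_eq_sub (mem_univ z), hsum] at hpairs
  rw [sum_congr rfl fun p _ =>
    show _ = (n + 1) * x p.1 - S + ((n + 1) * x p.2 - S) by ring, hpairs]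
  ring

/-- Indices are 0-based: `x₁` is `x 0`, and `2 ≤ i < j ≤ n` becomes
`p.1 ≠ 0 ∧ p.2 ≠ 0 ∧ p.1 < p.2`. -/
theorem stmt_14 (n : ℕ) (hn : 3 ≤ n)
    (ϖ : Fin n → (Fin n → ℝ) → ℝ)
    (hϖ : ∀ (ℓ : Fin n) (x : Fin n → ℝ),
      ϖ ℓ x = (n + 1) * (x ℓ) ^ 2 - 2 * x ℓ * ∑ j, x j)
    (Q : (Fin n → ℝ) → ℝ)
    (hQ : ∀ x : Fin n → ℝ,
      Q x = (x ⟨0, by omega⟩) ^ (n - 2) *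
        ∏ p ∈ Finset.univ.filter
          (fun p : Fin n × Fin n =>
            p.1 ≠ ⟨0, by omega⟩ ∧ p.2 ≠ ⟨0, by omega⟩ ∧ p.1 < p.2),
          (x p.1 - x p.2)) :
    ∀ x : Fin n → ℝ, ∑ ℓ, fderiv ℝ Q x (Pi.single ℓ 1) * ϖ ℓ x = 0 := by
  intro x
  set z : Fin n := ⟨0, by omega⟩
  set S := ∑ j, x j
  set U : Finset (Fin n) := univ.erase z
  have hQ' : Q = fun y => y z ^ (n - 2) * ∏ p ∈ U ×ˢ U with p.1 < p.2, (y p.1 - y p.2) := by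
    funext y
    rw [hQ]
    congr 2
    ext p
    simp [U, and_assoc]
  have hv : ∀ ℓ, ϖ ℓ x = x ℓ * ((n + 1) * x ℓ - 2 * S) := fun ℓ => by rw [hϖ]; ring
  have hQ_cofactor : HasCofactorAt Q (fun ℓ => ϖ ℓ x)
      (((n - 2 : ℕ) : ℝ) * ((n + 1) * x z - 2 * S)
        + ∑ p ∈ U ×ˢ U with p.1 < p.2, ((n + 1) * (x p.1 + x p.2) - 2 * S)) x :=
    hQ' ▸ ((hasCofactorAt_apply hv z).pow (n - 2)).mul
      (HasCofactorAt.finsetProd fun p _ => hasCofactorAt_apply_sub_apply hv p.1 p.2)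
  rw [sum_map_single_one_mul_eq_map, hQ_cofactor.2, superflow_cofactor_eq_zero, zero_mul]
end
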